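/- There exists a constant C > 0 such that the following holds. Let a < b and η > 0, and suppose p, v, w ∈ ℝ² and A ∈ ℝ satisfy |v − w| ≤ η, |p − (b−a)v| ≤ η(b−a), and |A| ≤ η(η + |v|)(b−a)². Then there is a C¹ curve σ: [a,b] → ℝ² such that: σ(a) = 0 and σ(b) = p; σ'(a) = v and σ'(b) = w; (1/2)∫_a^b (σ₁σ₂' − σ₂σ₁') = A; and |σ'(t) − v| ≤ Cη for all t ∈ [a,b]. -/

import Mathlib

/-!
After rescaling to `[0, 1]`, start from a base curve `σ₀`: the cubic Hermite interpolant of the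
boundary data, whose velocity stays `O(η)`-close to `v`, so that its area is `O(η (η + |v|))`.
Adding `μ s² (1 - s)² J v̂` (with `J` the rotation by a right angle) keeps the boundary data and
moves the velocity by `O(μ)`; since the perturbation is collinear, the area changes by the affine
amount `-μ ∫ s² (1 - s)² ⟪σ₀', v̂⟫`. A small twist of `σ₀` along `v̂` bounds this slope below by
`(η + |v|) / 30`, so the `μ` that produces the area `A` is `O(η)`.
-/

open MeasureTheory Set
open scoped RealInnerProductSpace EuclideanSpace

namespace PlaneCurve

variable {E : Type*} [NormedAddCommGroup E] [InnerProductSpace ℝ E]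

def bump (s : ℝ) : ℝ := s ^ 2 * (1 - s) ^ 2

def bumpDeriv (s : ℝ) : ℝ := 2 * s * (1 - s) * (1 - 2 * s)

def twist (s : ℝ) : ℝ := bump s * (2 * s - 1)

def twistDeriv (s : ℝ) : ℝ := bumpDeriv s * (2 * s - 1) + 2 * bump s

def hermite (V Q U : E) (s : ℝ) : E := s • V + (3 * s ^ 2 - 2 * s ^ 3) • Q + (s ^ 3 - s ^ 2) • U

def hermiteDeriv (V Q U : E) (s : ℝ) : E := V + (6 * s - 6 * s ^ 2) • Q + (3 * s ^ 2 - 2 * s) • U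

theorem hasDerivAt_bump (s : ℝ) : HasDerivAt bump (bumpDeriv s) s :=
  ((hasDerivAt_pow 2 s).mul (((hasDerivAt_id s).const_sub 1).pow 2)).congr_deriv
    (by simp [bumpDeriv]; ring)

theorem hasDerivAt_twist (s : ℝ) : HasDerivAt twist (twistDeriv s) s :=
  ((hasDerivAt_bump s).mul (((hasDerivAt_id s).const_mul 2).sub_const 1)).congr_deriv
    (by simp [twistDeriv]; ring)

theorem hasDerivAt_hermite (V Q U : E) (s : ℝ) :
    HasDerivAt (hermite V Q U) (hermiteDeriv V Q U s) s := by
  have h₁ := ((hasDerivAt_pow 2 s).const_mul 3).sub ((hasDerivAt_pow 3 s).const_mul 2)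
  have h₂ := (hasDerivAt_pow 3 s).sub (hasDerivAt_pow 2 s)
  refine (((hasDerivAt_id s).smul_const V).add (h₁.smul_const Q)).add (h₂.smul_const U)
    |>.congr_deriv ?_
  simp only [hermiteDeriv, one_smul]
  norm_num
  module

@[fun_prop]
theorem continuous_bumpDeriv : Continuous bumpDeriv := by unfold bumpDeriv; fun_prop

@[fun_prop]
theorem continuous_twistDeriv : Continuous twistDeriv := by
  unfold twistDeriv bump; fun_prop

@[fun_prop]
theorem continuous_hermiteDeriv (V Q U : E) : Continuous (hermiteDeriv V Q U) := by
  unfold hermiteDeriv; fun_prop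

section Bounds

variable {s : ℝ}

theorem abs_bumpDeriv_le (hs : s ∈ Icc (0 : ℝ) 1) : |bumpDeriv s| ≤ 1 / 2 := by
  obtain ⟨h0, h1⟩ := hs
  rw [bumpDeriv, abs_le]
  constructor <;> nlinarith [mul_nonneg h0 (sub_nonneg.2 h1), sq_nonneg (2 * s - 1)]

theorem abs_twist_le (hs : s ∈ Icc (0 : ℝ) 1) : |twist s| ≤ 1 / 16 := by
  obtain ⟨h0, h1⟩ := hs
  have hu : s * (1 - s) ≤ 1 / 4 := by nlinarith [sq_nonneg (2 * s - 1)]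
  have hbump : bump s ≤ 1 / 16 := by
    rw [bump, ← mul_pow]; nlinarith [mul_nonneg h0 (sub_nonneg.2 h1)]
  have hlin : |2 * s - 1| ≤ 1 := abs_le.2 ⟨by linarith, by linarith⟩
  rw [twist, abs_mul, abs_of_nonneg (by rw [bump]; positivity)]
  calc bump s * |2 * s - 1| ≤ 1 / 16 * 1 := by gcongr
    _ = 1 / 16 := mul_one _

theorem abs_twistDeriv_le (hs : s ∈ Icc (0 : ℝ) 1) : |twistDeriv s| ≤ 1 / 8 := by
  obtain ⟨h0, h1⟩ := hs
  have hu : s * (1 - s) ≤ 1 / 4 := by nlinarith [sq_nonneg (2 * s - 1)]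
  have hu0 : 0 ≤ s * (1 - s) := mul_nonneg h0 (sub_nonneg.2 h1)
  have : twistDeriv s = 10 * (s * (1 - s)) ^ 2 - 2 * (s * (1 - s)) := by
    simp only [twistDeriv, bumpDeriv, bump]; ring
  rw [this, abs_le]
  constructor <;> nlinarith [sq_nonneg (s * (1 - s) - 1 / 10), mul_nonneg hu0 (sub_nonneg.2 hu)]

theorem norm_hermite_sub_le (hs : s ∈ Icc (0 : ℝ) 1) (V Q U : E) :
    ‖hermite V Q U s - s • V‖ ≤ ‖Q‖ + ‖U‖ := by
  obtain ⟨h0, h1⟩ := hs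
  have hQ : |3 * s ^ 2 - 2 * s ^ 3| ≤ 1 := by
    rw [abs_le]; constructor <;> nlinarith [mul_nonneg (mul_nonneg h0 h0) (sub_nonneg.2 h1),
      mul_nonneg (sq_nonneg (1 - s)) (by linarith : (0:ℝ) ≤ 1 + 2 * s)]
  have hU : |s ^ 3 - s ^ 2| ≤ 1 := by
    rw [abs_le]; constructor <;> nlinarith [mul_nonneg (mul_nonneg h0 h0) (sub_nonneg.2 h1)]
  calc ‖hermite V Q U s - s • V‖ = ‖(3 * s ^ 2 - 2 * s ^ 3) • Q + (s ^ 3 - s ^ 2) • U‖ := by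
        rw [hermite]; congr 1; abel
    _ ≤ |3 * s ^ 2 - 2 * s ^ 3| * ‖Q‖ + |s ^ 3 - s ^ 2| * ‖U‖ := by
        rw [← Real.norm_eq_abs, ← Real.norm_eq_abs, ← norm_smul, ← norm_smul]
        exact norm_add_le _ _
    _ ≤ 1 * ‖Q‖ + 1 * ‖U‖ := by gcongr
    _ = ‖Q‖ + ‖U‖ := by rw [one_mul, one_mul]

theorem norm_hermiteDeriv_sub_le (hs : s ∈ Icc (0 : ℝ) 1) (V Q U : E) :
    ‖hermiteDeriv V Q U s - V‖ ≤ 3 / 2 * ‖Q‖ + ‖U‖ := by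
  obtain ⟨h0, h1⟩ := hs
  have hQ : |6 * s - 6 * s ^ 2| ≤ 3 / 2 := by
    rw [abs_le]; constructor <;> nlinarith [sq_nonneg (2 * s - 1)]
  have hU : |3 * s ^ 2 - 2 * s| ≤ 1 := by
    rw [abs_le]; constructor <;> nlinarith [sq_nonneg (3 * s - 1)]
  calc ‖hermiteDeriv V Q U s - V‖ = ‖(6 * s - 6 * s ^ 2) • Q + (3 * s ^ 2 - 2 * s) • U‖ := by
        rw [hermiteDeriv]; congr 1; abel
    _ ≤ |6 * s - 6 * s ^ 2| * ‖Q‖ + |3 * s ^ 2 - 2 * s| * ‖U‖ := by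
        rw [← Real.norm_eq_abs, ← Real.norm_eq_abs, ← norm_smul, ← norm_smul]
        exact norm_add_le _ _
    _ ≤ 3 / 2 * ‖Q‖ + 1 * ‖U‖ := by gcongr
    _ = 3 / 2 * ‖Q‖ + ‖U‖ := by rw [one_mul]

end Bounds

theorem integral_bump_mul_inner (V Q U e : E) (k : ℝ) :
    ∫ s in (0 : ℝ)..1, bump s * ⟪hermiteDeriv V Q U s + (k * twistDeriv s) • e, e⟫ =
      ⟪V, e⟫ / 30 + 3 / 70 * ⟪Q, e⟫ - ⟪U, e⟫ / 210 + k * ‖e‖ ^ 2 / 630 := by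
  simp only [hermiteDeriv, inner_add_left, real_inner_smul_left, real_inner_self_eq_norm_sq,
    bump, twistDeriv, bumpDeriv]
  ring_nf
  simp (disch := (apply Continuous.intervalIntegrable; fun_prop))
    [intervalIntegral.integral_add, intervalIntegral.integral_sub,
      intervalIntegral.integral_mul_const]
  ring

theorem exists_norm_eq_one_smul_eq [Nontrivial E] (V : E) : ∃ e : E, ‖e‖ = 1 ∧ ‖V‖ • e = V := by
  by_cases hV : V = 0
  · obtain ⟨e, he⟩ := exists_norm_eq E zero_le_one
    exact ⟨e, he, by simp [hV]⟩
  · exact ⟨‖V‖⁻¹ • V, norm_smul_inv_norm hV, smul_inv_smul₀ (norm_ne_zero_iff.2 hV) V⟩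

theorem norm_add_smul_sub_le {x y e : E} (he : ‖e‖ = 1) (c : ℝ) :
    ‖x + c • e - y‖ ≤ ‖x - y‖ + |c| := by
  rw [add_sub_right_comm]
  exact (norm_add_le _ _).trans_eq (by rw [norm_smul, he, mul_one, Real.norm_eq_abs])

/-- The twist along `e` keeps the slope `∫ bump ⟪τ₀', e⟫` away from `0` even when `V = 0`:
by `integral_bump_mul_inner` its weight `60` contributes `60 / 630`, which beats the
`3 / 70 + 1 / 210` that the Hermite part can lose. -/
theorem exists_baseCurve [Nontrivial E] (V W P : E) {δ : ℝ} (hW : ‖W - V‖ ≤ δ)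
    (hP : ‖P - V‖ ≤ δ) :
    ∃ (τ₀ τ₀' : ℝ → E) (e : E), ‖e‖ = 1 ∧ (∀ s, HasDerivAt τ₀ (τ₀' s) s) ∧ Continuous τ₀' ∧
      τ₀ 0 = 0 ∧ τ₀ 1 = P ∧ τ₀' 0 = V ∧ τ₀' 1 = W ∧
      (∀ s ∈ Icc (0 : ℝ) 1, ‖τ₀ s - s • V‖ ≤ 6 * δ) ∧
      (∀ s ∈ Icc (0 : ℝ) 1, ‖τ₀' s - V‖ ≤ 10 * δ) ∧
      (δ + ‖V‖) / 30 ≤ ∫ s in (0 : ℝ)..1, bump s * ⟪τ₀' s, e⟫ := by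
  obtain ⟨e, he, hVe⟩ := exists_norm_eq_one_smul_eq V
  have hδ : 0 ≤ δ := (norm_nonneg _).trans hW
  refine ⟨fun s => hermite V (P - V) (W - V) s + (60 * δ * twist s) • e,
    fun s => hermiteDeriv V (P - V) (W - V) s + (60 * δ * twistDeriv s) • e, e, he,
    fun s => (hasDerivAt_hermite _ _ _ s).add (((hasDerivAt_twist s).const_mul _).smul_const e),
    by fun_prop, by norm_num [hermite, twist, bump], by norm_num [hermite, twist, bump],
    by norm_num [hermiteDeriv, twistDeriv, bumpDeriv, bump],
    by norm_num [hermiteDeriv, twistDeriv, bumpDeriv, bump], ?_, ?_, ?_⟩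
  · intro s hs
    refine (norm_add_smul_sub_le he _).trans ?_
    rw [abs_mul, abs_of_nonneg (by positivity : 0 ≤ 60 * δ)]
    linarith [norm_hermite_sub_le hs V (P - V) (W - V),
      mul_le_mul_of_nonneg_left (abs_twist_le hs) (by positivity : 0 ≤ 60 * δ)]
  · intro s hs
    refine (norm_add_smul_sub_le he _).trans ?_
    rw [abs_mul, abs_of_nonneg (by positivity : 0 ≤ 60 * δ)]
    linarith [norm_hermiteDeriv_sub_le hs V (P - V) (W - V),
      mul_le_mul_of_nonneg_left (abs_twistDeriv_le hs) (by positivity : 0 ≤ 60 * δ)]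
  · have hQ := abs_real_inner_le_norm (P - V) e
    have hU := abs_real_inner_le_norm (W - V) e
    rw [he, mul_one] at hQ hU
    have hV : ⟪V, e⟫ = ‖V‖ := by
      conv_lhs => rw [← hVe]
      rw [real_inner_smul_left, real_inner_self_eq_norm_sq, he, one_pow, mul_one]
    rw [integral_bump_mul_inner, hV, he]
    linarith [abs_le.1 (hQ.trans hP), abs_le.1 (hU.trans hW)]

section Oriented

variable [Fact (Module.finrank ℝ E = 2)] (o : Orientation ℝ E (Fin 2))

local notation "ω" => o.areaForm
local notation "J" => o.rightAngleRotation

@[fun_prop]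
theorem _root_.Continuous.areaForm {α : Type*} [TopologicalSpace α] {f g : α → E}
    (hf : Continuous f) (hg : Continuous g) : Continuous fun x => ω (f x) (g x) := by
  simp_rw [← o.inner_rightAngleRotation_left]
  fun_prop

theorem abs_areaForm_smul_add_le (V R R' : E) {s : ℝ} (hs : s ∈ Icc (0 : ℝ) 1) :
    |ω (s • V + R) (V + R')| ≤ ‖V‖ * (‖R‖ + ‖R'‖) + ‖R‖ * ‖R'‖ := by
  have hω : ω (s • V + R) (V + R') = s * ω V R' + ω R V + ω R R' := by
    simp [o.areaForm_apply_self]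
    ring
  rw [hω]
  calc |s * ω V R' + ω R V + ω R R'|
      ≤ s * (‖V‖ * ‖R'‖) + ‖R‖ * ‖V‖ + ‖R‖ * ‖R'‖ := by
        refine (abs_add_three _ _ _).trans
          (add_le_add_three ?_ (o.abs_areaForm_le _ _) (o.abs_areaForm_le _ _))
        rw [abs_mul, abs_of_nonneg hs.1]
        exact mul_le_mul_of_nonneg_left (o.abs_areaForm_le _ _) hs.1
    _ ≤ 1 * (‖V‖ * ‖R'‖) + ‖R‖ * ‖V‖ + ‖R‖ * ‖R'‖ := by gcongr; exact hs.2
    _ = ‖V‖ * (‖R‖ + ‖R'‖) + ‖R‖ * ‖R'‖ := by ring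

theorem abs_integral_areaForm_le {τ τ' : ℝ → E} {V : E} {α β : ℝ}
    (hτ : ∀ s ∈ Icc (0 : ℝ) 1, ‖τ s - s • V‖ ≤ α) (hτ' : ∀ s ∈ Icc (0 : ℝ) 1, ‖τ' s - V‖ ≤ β) :
    |∫ s in (0 : ℝ)..1, ω (τ s) (τ' s)| ≤ ‖V‖ * (α + β) + α * β := by
  have hpoint : ∀ s ∈ Icc (0 : ℝ) 1, |ω (τ s) (τ' s)| ≤ ‖V‖ * (α + β) + α * β := by
    intro s hs
    have hα := hτ s hs
    have hβ := hτ' s hs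
    calc |ω (τ s) (τ' s)| = |ω (s • V + (τ s - s • V)) (V + (τ' s - V))| := by
          rw [add_sub_cancel, add_sub_cancel]
      _ ≤ ‖V‖ * (‖τ s - s • V‖ + ‖τ' s - V‖) + ‖τ s - s • V‖ * ‖τ' s - V‖ :=
          abs_areaForm_smul_add_le o _ _ _ hs
      _ ≤ ‖V‖ * (α + β) + α * β := by
          gcongr
          exact (norm_nonneg _).trans hα
  simpa using intervalIntegral.norm_integral_le_of_norm_le_const (a := 0) (b := 1)
    fun s hs => (Real.norm_eq_abs _).trans_le
      (hpoint s (Ioc_subset_Icc_self (by rwa [uIoc_of_le zero_le_one] at hs)))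

theorem integral_areaForm_add_smul_rightAngleRotation {τ τ' : ℝ → E} {φ φ' : ℝ → ℝ} {a b : ℝ}
    (hτ : ∀ s, HasDerivAt τ (τ' s) s) (hτ' : Continuous τ')
    (hφ : ∀ s, HasDerivAt φ (φ' s) s) (hφ' : Continuous φ') (ha : φ a = 0) (hb : φ b = 0)
    (e : E) (μ : ℝ) :
    ∫ s in a..b, ω (τ s + (μ * φ s) • J e) (τ' s + (μ * φ' s) • J e) =
      (∫ s in a..b, ω (τ s) (τ' s)) - 2 * μ * ∫ s in a..b, φ s * ⟪τ' s, e⟫ := by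
  have hτc : Continuous τ := continuous_iff_continuousAt.2 fun s => (hτ s).continuousAt
  have hφc : Continuous φ := continuous_iff_continuousAt.2 fun s => (hφ s).continuousAt
  have hexact : ∫ s in a..b, (φ' s * ⟪τ s, e⟫ + φ s * ⟪τ' s, e⟫) = 0 := by
    rw [intervalIntegral.integral_eq_sub_of_hasDerivAt (f := fun s => φ s * ⟪τ s, e⟫)
      (fun s _ => (hφ s).mul ((hτ s).inner ℝ (hasDerivAt_const s e)) |>.congr_deriv (by simp))
      ((by fun_prop : Continuous _).intervalIntegrable _ _)]
    simp [ha, hb]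
  have hpoint : ∀ s, ω (τ s + (μ * φ s) • J e) (τ' s + (μ * φ' s) • J e) =
      ω (τ s) (τ' s) + μ * (φ' s * ⟪τ s, e⟫ + φ s * ⟪τ' s, e⟫) - 2 * μ * (φ s * ⟪τ' s, e⟫) := by
    intro s
    simp [o.areaForm_rightAngleRotation_left, o.areaForm_rightAngleRotation_right, real_inner_comm,
      inner_add_right, inner_smul_right]
    ring
  simp_rw [hpoint]
  rw [intervalIntegral.integral_sub, intervalIntegral.integral_add,
    intervalIntegral.integral_const_mul, intervalIntegral.integral_const_mul, hexact]
  · ring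
  all_goals apply Continuous.intervalIntegrable; fun_prop

theorem exists_curve_with_area_on_unitInterval (V W P : E) {δ A : ℝ} (hδ : 0 < δ) (hW : ‖W - V‖ ≤ δ)
    (hP : ‖P - V‖ ≤ δ) (hA : |A| ≤ δ * (δ + ‖V‖)) :
    ∃ τ τ' : ℝ → E, (∀ s, HasDerivAt τ (τ' s) s) ∧ Continuous τ' ∧
      τ 0 = 0 ∧ τ 1 = P ∧ τ' 0 = V ∧ τ' 1 = W ∧
      (1 / 2) * ∫ s in (0 : ℝ)..1, ω (τ s) (τ' s) = A ∧
      ∀ s ∈ Icc (0 : ℝ) 1, ‖τ' s - V‖ ≤ 500 * δ := by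
  have : Nontrivial E := Module.nontrivial_of_finrank_eq_succ (R := ℝ) (Fact.out (p := _ = 2))
  obtain ⟨τ₀, τ₀', e, he, hτ₀, hτ₀', h0, h1, h0', h1', hdev, hdev', hB⟩ :=
    exists_baseCurve V W P hW hP
  set B := ∫ s in (0 : ℝ)..1, bump s * ⟪τ₀' s, e⟫
  set A₀ := (1 / 2) * ∫ s in (0 : ℝ)..1, ω (τ₀ s) (τ₀' s) with hA₀def
  have hA₀ : |A₀| ≤ 30 * δ * (δ + ‖V‖) := by
    have := abs_integral_areaForm_le o hdev hdev'
    rw [abs_mul, abs_of_pos (by norm_num : (0 : ℝ) < 1 / 2)]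
    nlinarith [norm_nonneg V]
  have hBpos : 0 < B := lt_of_lt_of_le (by positivity) hB
  set μ := (A₀ - A) / B
  have hμ : |μ| ≤ 930 * δ := by
    rw [abs_div, abs_of_pos hBpos, div_le_iff₀ hBpos]
    calc |A₀ - A| ≤ |A₀| + |A| := abs_sub _ _
      _ ≤ 31 * δ * (δ + ‖V‖) := by linarith
      _ ≤ 930 * δ * B := by nlinarith
  refine ⟨fun s => τ₀ s + (μ * bump s) • J e, fun s => τ₀' s + (μ * bumpDeriv s) • J e,
    fun s => (hτ₀ s).add (((hasDerivAt_bump s).const_mul μ).smul_const _), by fun_prop,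
    by simp [h0, bump], by simp [h1, bump], by simp [h0', bumpDeriv], by simp [h1', bumpDeriv],
    ?_, ?_⟩
  · rw [integral_areaForm_add_smul_rightAngleRotation o hτ₀ hτ₀' hasDerivAt_bump
      continuous_bumpDeriv (by simp [bump]) (by simp [bump])]
    have hμB : μ * B = A₀ - A := div_mul_cancel₀ _ hBpos.ne'
    linear_combination -hμB - hA₀def
  · intro s hs
    calc ‖τ₀' s + (μ * bumpDeriv s) • J e - V‖ ≤ ‖τ₀' s - V‖ + |μ| * |bumpDeriv s| := by
          rw [← abs_mul]
          exact norm_add_smul_sub_le ((LinearIsometryEquiv.norm_map _ _).trans he) _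
      _ ≤ 10 * δ + 930 * δ * (1 / 2) := by
          gcongr
          exacts [hdev' s hs, abs_bumpDeriv_le hs]
      _ ≤ 500 * δ := by linarith

theorem exists_curve_with_area {a b η A : ℝ} {p v w : E} (hab : a < b) (hη : 0 < η)
    (hvw : ‖v - w‖ ≤ η) (hp : ‖p - (b - a) • v‖ ≤ η * (b - a))
    (hA : |A| ≤ η * (η + ‖v‖) * (b - a) ^ 2) :
    ∃ σ σ' : ℝ → E, (∀ t, HasDerivAt σ (σ' t) t) ∧ Continuous σ' ∧
      σ a = 0 ∧ σ b = p ∧ σ' a = v ∧ σ' b = w ∧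
      (1 / 2) * ∫ t in a..b, ω (σ t) (σ' t) = A ∧
      ∀ t ∈ Icc a b, ‖σ' t - v‖ ≤ 500 * η := by
  have hL : 0 < b - a := sub_pos.2 hab
  obtain ⟨τ, τ', hτ, hτ', h0, h1, h0', h1', harea, hbound⟩ :=
    exists_curve_with_area_on_unitInterval o ((b - a) • v) ((b - a) • w) p (δ := η * (b - a))
      (by positivity)
      (by rw [← smul_sub, norm_smul, Real.norm_of_nonneg hL.le, norm_sub_rev, mul_comm]; gcongr)
      hp
      (by rw [norm_smul, Real.norm_of_nonneg hL.le]; convert hA using 1; ring)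
  refine ⟨fun t => τ ((t - a) / (b - a)), fun t => (b - a)⁻¹ • τ' ((t - a) / (b - a)),
    fun t => ((hτ _).scomp t (((hasDerivAt_id t).sub_const a).div_const (b - a))).congr_deriv
      (by simp [div_eq_inv_mul]),
    by fun_prop, by simp [h0], by simp [hL.ne', h1], by simp [h0', hL.ne'],
    by simp [h1', hL.ne'], ?_, ?_⟩
  · simp only [map_smul, smul_eq_mul, intervalIntegral.integral_const_mul, sub_div _ a]
    rw [intervalIntegral.inv_mul_integral_comp_div_sub (f := fun s => ω (τ s) (τ' s)), sub_self,
      ← sub_div, div_self hL.ne', harea]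
  · intro t ht
    have hst : (t - a) / (b - a) ∈ Icc (0 : ℝ) 1 :=
      ⟨div_nonneg (by linarith [ht.1]) hL.le, (div_le_one hL).2 (by linarith [ht.2])⟩
    calc ‖(b - a)⁻¹ • τ' ((t - a) / (b - a)) - v‖
        = (b - a)⁻¹ * ‖τ' ((t - a) / (b - a)) - (b - a) • v‖ := by
          rw [← norm_smul_of_nonneg (inv_nonneg.2 hL.le), smul_sub, inv_smul_smul₀ hL.ne']
      _ ≤ (b - a)⁻¹ * (500 * (η * (b - a))) := by gcongr; exact hbound _ hst
      _ = 500 * η := by field_simp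

end Oriented

theorem areaForm_basisFun_orientation (x y : EuclideanSpace ℝ (Fin 2)) :
    (EuclideanSpace.basisFun (Fin 2) ℝ).toBasis.orientation.areaForm x y =
      x 0 * y 1 - x 1 * y 0 := by
  rw [Orientation.areaForm_to_volumeForm,
    Orientation.volumeForm_robust _ (EuclideanSpace.basisFun (Fin 2) ℝ) rfl, Module.Basis.det_apply,
    Matrix.det_fin_two]
  simp [Module.Basis.toMatrix_apply]
  ring

end PlaneCurve

theorem plane_curve_with_prescribed_area :
    ∃ C : ℝ, 0 < C ∧
      ∀ (a b η : ℝ) (p v w : EuclideanSpace ℝ (Fin 2)) (A : ℝ),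
        a < b → 0 < η →
        ‖v - w‖ ≤ η →
        ‖p - (b - a) • v‖ ≤ η * (b - a) →
        |A| ≤ η * (η + ‖v‖) * (b - a) ^ 2 →
        ∃ σ σ' : ℝ → EuclideanSpace ℝ (Fin 2),
          (∀ t ∈ Set.Icc a b, HasDerivWithinAt σ (σ' t) (Set.Icc a b) t) ∧
          ContinuousOn σ' (Set.Icc a b) ∧
          σ a = 0 ∧ σ b = p ∧ σ' a = v ∧ σ' b = w ∧
          (1 / 2) * (∫ t in a..b, (σ t 0 * σ' t 1 - σ t 1 * σ' t 0)) = A ∧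
          ∀ t ∈ Set.Icc a b, ‖σ' t - v‖ ≤ C * η := by
  refine ⟨500, by norm_num, fun a b η p v w A hab hη hvw hp hA => ?_⟩
  obtain ⟨σ, σ', hσ, hσ', h0, h1, h0', h1', harea, hbound⟩ :=
    PlaneCurve.exists_curve_with_area (EuclideanSpace.basisFun (Fin 2) ℝ).toBasis.orientation
      hab hη hvw hp hA
  refine ⟨σ, σ', fun t _ => (hσ t).hasDerivWithinAt, hσ'.continuousOn, h0, h1, h0', h1', ?_,
    hbound⟩
  simpa only [PlaneCurve.areaForm_basisFun_orientation] using harea
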